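/- arXiv:2509.02575 — 4 statements merged into one kernel-verified Lean document; each statement's English description precedes it below -/
import Mathlib

section
/- (Curvature attenuation) Let L : EuclideanSpace ℝ (Fin d) → ℝ be twice continuously differentiable, let m₁, …, m_K ∈ EuclideanSpace ℝ (Fin d) satisfy 0 ≤ (m_k)_i ≤ 1 for all k and i, and let p₁, …, p_K ≥ 0 with Σ_{k=1}^K p_k = 1. Define L̄(θ) = Σ_{k=1}^K p_k L(m_k ⊙ θ). Fix θ and suppose λ ≥ 0 is such that for every k and every w ∈ EuclideanSpace ℝ (Fin d), D²L(m_k ⊙ θ)(w, w) ≤ λ ‖w‖². Then for every u ∈ EuclideanSpace ℝ (Fin d), D²L̄(θ)(u, u) ≤ λ ‖u‖². In particular, the maximum curvature of the smoothed objective at θ is bounded by the maximum curvature of the original objective over the masked points. -/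
/-!
Since `u ↦ m ⊙ u` is linear, the chain rule gives
`D²L̄(θ)(u, u) = Σ_k p_k D²L(m_k ⊙ θ)(m_k ⊙ u, m_k ⊙ u)`. A mask with entries in `[0, 1]`
does not increase the Euclidean norm, so the `k`-th term is at most `p_k λ ‖u‖²`, and the
weights sum to `1`.
-/

/-- Hadamard (coordinatewise) product on `EuclideanSpace ℝ (Fin d)`. -/
noncomputable def hadamard {d : ℕ} (m x : EuclideanSpace ℝ (Fin d)) :
    EuclideanSpace ℝ (Fin d) :=
  WithLp.toLp 2 (fun i => m i * x i)

section SecondDerivative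

variable {𝕜 E F : Type*} [NontriviallyNormedField 𝕜] [NormedAddCommGroup E] [NormedSpace 𝕜 E]
  [NormedAddCommGroup F] [NormedSpace 𝕜 F]

theorem fderiv_fderiv_comp_continuousLinearMap_apply {f : F → 𝕜} (hf : ContDiff 𝕜 2 f)
    (A : E →L[𝕜] F) (x u v : E) :
    fderiv 𝕜 (fderiv 𝕜 fun y => f (A y)) x u v = fderiv 𝕜 (fderiv 𝕜 f) (A x) (A u) (A v) := by
  simpa [iteratedFDeriv_two_apply, Function.comp_def] using
    congrArg (· ![u, v]) (A.iteratedFDeriv_comp_right hf x (i := 2) le_rfl)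

theorem fderiv_fderiv_weighted_sum_apply {ι : Type*} (s : Finset ι) (p : ι → 𝕜)
    {g : ι → E → 𝕜} (hg : ∀ k ∈ s, ContDiff 𝕜 2 (g k)) (x u v : E) :
    fderiv 𝕜 (fderiv 𝕜 fun y => ∑ k ∈ s, p k * g k y) x u v
      = ∑ k ∈ s, p k * fderiv 𝕜 (fderiv 𝕜 (g k)) x u v := by
  have h := iteratedFDeriv_fun_sum_apply (n := 2) (x := x)
    (f := fun k y => p k • g k y) fun k hk => ((hg k hk).const_smul (p k)).contDiffAt
  rw [Finset.sum_congr rfl fun k hk => iteratedFDeriv_const_smul_apply' (hg k hk).contDiffAt] at h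
  simpa [iteratedFDeriv_two_apply] using congrArg (· ![u, v]) h

end SecondDerivative

section Hadamard

variable {d : ℕ}

noncomputable def hadamardCLM (m : EuclideanSpace ℝ (Fin d)) :
    EuclideanSpace ℝ (Fin d) →L[ℝ] EuclideanSpace ℝ (Fin d) :=
  LinearMap.toContinuousLinearMap
    { toFun := hadamard m
      map_add' := fun x y => by ext i; simp [hadamard, mul_add]
      map_smul' := fun c x => by ext i; simp [hadamard, mul_left_comm] }

theorem norm_hadamard_le {m : EuclideanSpace ℝ (Fin d)} (hm : ∀ i, |m i| ≤ 1)
    (u : EuclideanSpace ℝ (Fin d)) : ‖hadamard m u‖ ≤ ‖u‖ := by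
  rw [EuclideanSpace.norm_eq, EuclideanSpace.norm_eq]
  gcongr with i
  simpa [hadamard, abs_mul] using mul_le_of_le_one_left (abs_nonneg (u i)) (hm i)

end Hadamard

/-- Curvature attenuation: if the curvature of `L` at every masked point `m_k ⊙ θ` is
bounded by `λ`, and each mask has coordinates in `[0,1]`, then the curvature of the
smoothed objective `L̄(θ) = Σ_k p_k L(m_k ⊙ θ)` at `θ` is also bounded by `λ`. -/
theorem smoothed_curvature_attenuation {d K : ℕ} (L : EuclideanSpace ℝ (Fin d) → ℝ)
    (hL : ContDiff ℝ 2 L)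
    (m : Fin K → EuclideanSpace ℝ (Fin d))
    (hm : ∀ k, ∀ i, 0 ≤ m k i ∧ m k i ≤ 1)
    (p : Fin K → ℝ) (hp : ∀ k, 0 ≤ p k) (hp1 : ∑ k, p k = 1)
    (θ : EuclideanSpace ℝ (Fin d)) (lam : ℝ) (hlam : 0 ≤ lam)
    (hH : ∀ k, ∀ w : EuclideanSpace ℝ (Fin d),
      fderiv ℝ (fderiv ℝ L) (hadamard (m k) θ) w w ≤ lam * ‖w‖ ^ 2) :
    ∀ u : EuclideanSpace ℝ (Fin d),
      fderiv ℝ (fderiv ℝ (fun θ' => ∑ k, p k * L (hadamard (m k) θ'))) θ u u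
        ≤ lam * ‖u‖ ^ 2 := by
  intro u
  have hmask : ∀ k, ‖hadamard (m k) u‖ ≤ ‖u‖ := fun k =>
    norm_hadamard_le (fun i => abs_le.2 ⟨by linarith [(hm k i).1], (hm k i).2⟩) u
  rw [fderiv_fderiv_weighted_sum_apply _ p (g := fun k θ' => L (hadamard (m k) θ'))
    fun k _ => hL.comp (hadamardCLM (m k)).contDiff]
  calc ∑ k, p k * fderiv ℝ (fderiv ℝ fun θ' => L (hadamard (m k) θ')) θ u u
      = ∑ k, p k * fderiv ℝ (fderiv ℝ L) (hadamard (m k) θ)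
          (hadamard (m k) u) (hadamard (m k) u) :=
        Finset.sum_congr rfl fun k _ => congrArg (p k * ·)
          (fderiv_fderiv_comp_continuousLinearMap_apply hL (hadamardCLM (m k)) θ u u)
    _ ≤ ∑ k, p k * (lam * ‖u‖ ^ 2) := by
        gcongr with k
        · exact hp k
        · exact (hH k _).trans (by gcongr; exact hmask k)
    _ = lam * ‖u‖ ^ 2 := by rw [← Finset.sum_mul, hp1, one_mul]
end

section
/- (Proposition 2) Let L : EuclideanSpace ℝ (Fin d) → ℝ be twice continuously differentiable at θ with ∇L(θ) = 0. Let ξ₁, …, ξ_K ∈ EuclideanSpace ℝ (Fin d) and p₁, …, p_K ≥ 0 with Σ_k p_k = 1, and suppose the coordinates of this finitely supported random vector satisfy Σ_k p_k (ξ_k)_i = 0 for all i and Σ_k p_k (ξ_k)_i (ξ_k)_j = 0 for all i ≠ j; write v_i = Σ_k p_k (ξ_k)_i². Then, as t → 0, Σ_{k=1}^K p_k L(θ ⊙ (𝟏 − t ξ_k)) = L(θ) + (t²/2) Σ_{i=1}^d v_i θ_i² D²L(θ)(e_i, e_i) + o(t²), where e_i is the i-th standard basis vector and 𝟏 is the all-ones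 vector. -/
/-!
Along each line `t ↦ θ + t • w` the one-variable Taylor expansion with Peano remainder gives
`L (θ + t • w) = L θ + t DL(θ) w + t²/2 D²L(θ)(w, w) + o(t²)`. The masked point is
`θ ⊙ (𝟏 - t ξ_k) = θ - t (θ ⊙ ξ_k)`; the linear term vanishes at a critical point, and averaging
the quadratic terms over `k` removes every off-diagonal entry of `D²L(θ)` because the coordinates
of `ξ` are uncorrelated, leaving `Σ_i v_i θ_i² D²L(θ)(e_i, e_i)`.
-/

open Asymptotics

/-- The all-ones vector in `EuclideanSpace ℝ (Fin d)`. -/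
noncomputable def allOnes (d : ℕ) : EuclideanSpace ℝ (Fin d) := WithLp.toLp 2 (fun _ => 1)

open Filter Topology Finset

section Taylor

variable {E F : Type*} [NormedAddCommGroup E] [NormedSpace ℝ E]
  [NormedAddCommGroup F] [NormedSpace ℝ F]

theorem isLittleO_taylor_two_of_hasDerivAt {f f' : ℝ → F} {c : F}
    (hf : ∀ᶠ t in 𝓝 0, HasDerivAt f (f' t) t) (hf' : HasDerivAt f' c 0) :
    (fun t : ℝ => f t - f 0 - t • f' 0 - (t ^ 2 / 2) • c) =o[𝓝 0] fun t => t ^ 2 := by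
  -- The remainder's derivative is `o(t)`, so the mean value inequality makes it `o(t²)`.
  obtain ⟨ε, hε, hball⟩ := Metric.eventually_nhds_iff_ball.mp hf
  have hg : ∀ t ∈ Metric.ball (0 : ℝ) ε, HasDerivWithinAt
      (fun s : ℝ => f s - s • f' 0 - (s ^ 2 / 2) • c) (f' t - f' 0 - t • c) (Metric.ball 0 ε) t := by
    intro t ht
    have hsq : HasDerivAt (fun s : ℝ => s ^ 2 / 2) t t := by
      simpa using (hasDerivAt_pow 2 t).div_const 2
    simpa using (((hball t ht).fun_sub ((hasDerivAt_id t).smul_const (f' 0))).fun_sub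
      (hsq.smul_const c)).hasDerivWithinAt
  have hg' : (fun t => f' t - f' 0 - t • c) =o[𝓝[Metric.ball 0 ε] 0] fun t => (t - 0) ^ 1 := by
    simpa using (hasDerivAt_iff_isLittleO.mp hf').mono nhdsWithin_le_nhds
  have := (convex_ball (0 : ℝ) ε).isLittleO_pow_succ_real (Metric.mem_ball_self hε) hg hg'
  rw [nhdsWithin_eq_nhds.mpr (Metric.ball_mem_nhds 0 hε)] at this
  simp only [sub_zero, Nat.reduceAdd] at this
  refine this.congr_left fun t => ?_
  simp only [zero_smul, sub_zero, ne_eq, OfNat.ofNat_ne_zero, not_false_eq_true, zero_pow,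
    zero_div]
  abel

theorem ContDiffAt.isLittleO_taylor_two_along_line {L : E → F} {θ : E}
    (hL : ContDiffAt ℝ 2 L θ) (u : E) :
    (fun t : ℝ => L (θ + t • u) - L θ - t • fderiv ℝ L θ u
        - (t ^ 2 / 2) • fderiv ℝ (fderiv ℝ L) θ u u) =o[𝓝 0] fun t => t ^ 2 := by
  have hline : ∀ t : ℝ, HasDerivAt (fun s : ℝ => θ + s • u) u t := fun t => by
    simpa using ((hasDerivAt_id t).smul_const u).const_add θ
  have hline0 : Tendsto (fun s : ℝ => θ + s • u) (𝓝 0) (𝓝 θ) := by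
    simpa using ((hline 0).continuousAt).tendsto
  have hdiff : ∀ᶠ t in 𝓝 (0 : ℝ), HasDerivAt (fun s => L (θ + s • u))
      (fderiv ℝ L (θ + t • u) u) t := by
    filter_upwards [hline0.eventually (hL.eventually (by simp))] with t ht
    exact (ht.differentiableAt two_ne_zero).hasFDerivAt.comp_hasDerivAt t (hline t)
  have hD2 : HasFDerivAt (fderiv ℝ L) (fderiv ℝ (fderiv ℝ L) θ) θ :=
    ((hL.fderiv_right one_add_one_eq_two.le).differentiableAt one_ne_zero).hasFDerivAt
  have hdiff' : HasDerivAt (fun t : ℝ => fderiv ℝ L (θ + t • u) u)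
      (fderiv ℝ (fderiv ℝ L) θ u u) 0 := by
    have := (hD2.comp_hasDerivAt_of_eq 0 (hline 0) (by simp)).clm_apply (hasDerivAt_const 0 u)
    simpa using this
  simpa using isLittleO_taylor_two_of_hasDerivAt hdiff hdiff'

end Taylor

section Bilinear

variable {ι κ F : Type*} [Fintype ι] [DecidableEq ι] [Fintype κ]
  [NormedAddCommGroup F] [NormedSpace ℝ F]

theorem EuclideanSpace.bilin_apply_eq_sum_single
    (B : EuclideanSpace ℝ ι →L[ℝ] EuclideanSpace ℝ ι →L[ℝ] F) (x y : EuclideanSpace ℝ ι) :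
    B x y = ∑ i, ∑ j, (x i * y j) • B (EuclideanSpace.single i 1) (EuclideanSpace.single j 1) := by
  have hsum : ∀ z : EuclideanSpace ℝ ι, ∑ i, z i • EuclideanSpace.single i (1 : ℝ) = z := fun z => by
    simpa using (EuclideanSpace.basisFun ι ℝ).toBasis.sum_repr z
  conv_lhs => rw [← hsum x, ← hsum y]
  simp only [map_sum, map_smul, _root_.sum_apply, _root_.smul_apply, smul_sum, smul_smul]
  rw [sum_comm]
  exact sum_congr rfl fun i _ => sum_congr rfl fun j _ => by rw [mul_comm]

theorem sum_smul_bilin_self_eq_diag_of_uncorrelated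
    (B : EuclideanSpace ℝ ι →L[ℝ] EuclideanSpace ℝ ι →L[ℝ] F)
    (p : κ → ℝ) (u : κ → EuclideanSpace ℝ ι)
    (huncorr : ∀ i j, i ≠ j → ∑ k, p k * (u k i * u k j) = 0) :
    ∑ k, p k • B (u k) (u k) =
      ∑ i, (∑ k, p k * u k i ^ 2) • B (EuclideanSpace.single i 1) (EuclideanSpace.single i 1) := by
  simp_rw [EuclideanSpace.bilin_apply_eq_sum_single B (u _), smul_sum, smul_smul]
  rw [sum_comm]
  refine sum_congr rfl fun i _ => ?_
  rw [sum_comm, sum_eq_single i, sum_smul]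
  · exact sum_congr rfl fun k _ => by ring_nf
  · intro j _ hji
    rw [← sum_smul, huncorr i j hji.symm, zero_smul]
  · simp

end Bilinear

theorem smoothed_objective_taylor_general {d K : ℕ} (L : EuclideanSpace ℝ (Fin d) → ℝ)
    (θ : EuclideanSpace ℝ (Fin d))
    (hL : ContDiffAt ℝ 2 L θ) (hgrad : gradient L θ = 0)
    (ξ : Fin K → EuclideanSpace ℝ (Fin d))
    (p : Fin K → ℝ) (hp1 : ∑ k, p k = 1)
    (huncorr : ∀ i j, i ≠ j → ∑ k, p k * (ξ k i * ξ k j) = 0)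
    (v : Fin d → ℝ) (hv : ∀ i, v i = ∑ k, p k * (ξ k i) ^ 2) :
    (fun t : ℝ =>
        (∑ k, p k * L (hadamard θ (allOnes d - t • ξ k)))
          - L θ
          - t ^ 2 / 2 * ∑ i, v i * θ i ^ 2 *
              fderiv ℝ (fderiv ℝ L) θ (EuclideanSpace.single i 1)
                (EuclideanSpace.single i 1))
      =o[nhds (0 : ℝ)] fun t => t ^ 2 := by
  set B := fderiv ℝ (fderiv ℝ L) θ
  set u : Fin K → EuclideanSpace ℝ (Fin d) := fun k => hadamard θ (ξ k)
  have hu : ∀ k i, u k i = θ i * ξ k i := fun _ _ => rfl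
  have hfderiv : fderiv ℝ L θ = 0 := by rw [← toDual_gradient, hgrad, map_zero]
  have hmask : ∀ (t : ℝ) k, hadamard θ (allOnes d - t • ξ k) = θ + t • -u k := fun t k => by
    ext i
    simp only [hadamard, allOnes, PiLp.sub_apply, PiLp.smul_apply, smul_eq_mul, smul_neg,
      PiLp.add_apply, PiLp.neg_apply, hu]
    ring
  have hcov : ∀ i j, ∑ k, p k * (u k i * u k j) = θ i * θ j * ∑ k, p k * (ξ k i * ξ k j) :=
    fun i j => by
      rw [mul_sum]
      exact sum_congr rfl fun k _ => by rw [hu, hu]; ring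
  have hcurv : ∑ k, p k * B (-u k) (-u k) =
      ∑ i, v i * θ i ^ 2 * B (EuclideanSpace.single i 1) (EuclideanSpace.single i 1) := by
    simp only [map_neg, neg_apply, neg_neg, ← smul_eq_mul (p _)]
    rw [sum_smul_bilin_self_eq_diag_of_uncorrelated B p u fun i j hij => by
      rw [hcov, huncorr i j hij, mul_zero]]
    refine sum_congr rfl fun i _ => ?_
    simp only [sq, hcov, hv, smul_eq_mul]
    ring
  have htaylor := IsLittleO.sum fun k (_ : k ∈ univ) =>
    (hL.isLittleO_taylor_two_along_line (-u k)).const_mul_left (p k)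
  refine htaylor.congr_left fun t => ?_
  simp only [Finset.sum_apply, hmask, hfderiv, smul_neg, zero_apply, smul_eq_mul, mul_zero,
    neg_zero, sub_zero, map_neg, neg_apply, neg_neg, mul_sub, sum_sub_distrib, ← sum_mul, hp1, one_mul,
    ← hcurv, mul_sum, sub_right_inj]
  exact sum_congr rfl fun _ _ => by ring

/-- Proposition 2: if `L` is twice continuously differentiable at a critical point `θ`
(`∇L(θ) = 0`) and the finitely supported random perturbation `ξ` (values `ξ k` with
probabilities `p k`) has centered, pairwise-uncorrelated coordinates with `v i = E[ξ_i²]`,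
then as `t → 0`,
`Σ_k p_k L(θ ⊙ (𝟏 − t ξ_k)) = L(θ) + (t²/2) Σ_i v_i θ_i² D²L(θ)(e_i, e_i) + o(t²)`. -/
theorem smoothed_objective_taylor {d K : ℕ} (L : EuclideanSpace ℝ (Fin d) → ℝ)
    (θ : EuclideanSpace ℝ (Fin d))
    (hL : ContDiffAt ℝ 2 L θ) (hgrad : gradient L θ = 0)
    (ξ : Fin K → EuclideanSpace ℝ (Fin d))
    (p : Fin K → ℝ) (hp : ∀ k, 0 ≤ p k) (hp1 : ∑ k, p k = 1)
    (hmean : ∀ i, ∑ k, p k * ξ k i = 0)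
    (huncorr : ∀ i j, i ≠ j → ∑ k, p k * (ξ k i * ξ k j) = 0)
    (v : Fin d → ℝ) (hv : ∀ i, v i = ∑ k, p k * (ξ k i) ^ 2) :
    (fun t : ℝ =>
        (∑ k, p k * L (hadamard θ (allOnes d - t • ξ k)))
          - L θ
          - t ^ 2 / 2 * ∑ i, v i * θ i ^ 2 *
              fderiv ℝ (fderiv ℝ L) θ (EuclideanSpace.single i 1)
                (EuclideanSpace.single i 1))
      =o[nhds (0 : ℝ)] fun t => t ^ 2 :=
  smoothed_objective_taylor_general L θ hL hgrad ξ p hp1 huncorr v hv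
end

section
/- (Proposition 5, quadratic form) Let H : Matrix (Fin d) (Fin d) ℝ be a symmetric positive semidefinite matrix, θ♯ ∈ ℝ^d, and let L : ℝ^d → ℝ be the quadratic function L(θ) = c + (1/2)(θ − θ♯)ᵀ H (θ − θ♯). Let D be a random mask vector on a finite probability space with values in [0,1]^d whose coordinates D_1, …, D_d are pairwise uncorrelated (E[D_i D_j] = E[D_i]E[D_j] for i ≠ j), and define the smoothed objective L̄(θ) = E[L(D ⊙ θ)]. Then L̄(θ♯) ≥ L(θ♯) + (1/2) Σ_{i=1}^d Var[D_i] · H_{ii} · (θ♯_i)². In particular, if Var[D_i] > 0, H_{ii} > 0 and θ♯_i ≠ 0 for some coordinate i, then L̄(θ♯) > L(θ♯), so the sharp minimizer θ♯ of L incurs a strictly positive smoothing penalty that grows linearly with the curvature H_{ii}. -/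
/-!
Write `X = D ⊙ θ♯ - θ♯`, so that `L̄(θ♯) = c + ½ E[Xᵀ H X]`. Splitting the second moments of `X`
into means and covariances gives `E[Xᵀ H X] = E[X]ᵀ H E[X] + Σ_{ij} H_{ij} Cov(X_i, X_j)`. The first
term is nonnegative since `H` is positive semidefinite, and since `X_i = θ♯_i D_i - θ♯_i` the
covariance matrix of `X` is diagonal with entries `(θ♯_i)² Var[D_i]`.
-/

open Finset Matrix

section WeightedCovariance

variable {Ω : Type*} [Fintype Ω]

def weightedCov (q f g : Ω → ℝ) : ℝ :=
  ∑ ω, q ω * (f ω * g ω) - (∑ ω, q ω * f ω) * ∑ ω, q ω * g ω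

variable {q : Ω → ℝ}

theorem sum_mul_affine (hq1 : ∑ ω, q ω = 1) (f : Ω → ℝ) (a b : ℝ) :
    ∑ ω, q ω * (a * f ω + b) = a * ∑ ω, q ω * f ω + b := by
  simp only [mul_add, sum_add_distrib, ← sum_mul, hq1, one_mul, mul_sum, mul_left_comm]

theorem weightedCov_affine (hq1 : ∑ ω, q ω = 1) (f g : Ω → ℝ) (a b a' b' : ℝ) :
    weightedCov q (fun ω => a * f ω + b) (fun ω => a' * g ω + b') = a * a' * weightedCov q f g := by
  have expand : ∀ ω, q ω * ((a * f ω + b) * (a' * g ω + b')) =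
      a * a' * (q ω * (f ω * g ω)) + a * b' * (q ω * f ω) + b * a' * (q ω * g ω) + b * b' * q ω :=
    fun ω => by ring
  simp only [weightedCov, sum_mul_affine hq1, expand, sum_add_distrib, ← mul_sum, hq1]
  ring

theorem weightedCov_self_nonneg (hq : ∀ ω, 0 ≤ q ω) (hq1 : ∑ ω, q ω = 1) (f : Ω → ℝ) :
    0 ≤ weightedCov q f f := by
  have cauchySchwarz : (∑ ω, q ω * f ω) ^ 2 ≤ (∑ ω, q ω) * ∑ ω, q ω * (f ω * f ω) :=
    sum_sq_le_sum_mul_sum_of_sq_le_mul _ (fun ω _ => hq ω)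
      (fun ω _ => mul_nonneg (hq ω) (mul_self_nonneg _)) (fun ω _ => le_of_eq (by ring))
  rw [hq1, one_mul] at cauchySchwarz
  unfold weightedCov
  nlinarith

end WeightedCovariance

section ExpectedQuadraticForm

variable {Ω ι : Type*} [Fintype Ω] [Fintype ι] (q : Ω → ℝ) (X : Ω → ι → ℝ)

theorem sum_mul_dotProduct_mulVec_eq (H : Matrix ι ι ℝ) :
    ∑ ω, q ω * (X ω ⬝ᵥ H *ᵥ X ω) =
      (fun i => ∑ ω, q ω * X ω i) ⬝ᵥ H *ᵥ (fun i => ∑ ω, q ω * X ω i) +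
        ∑ i, ∑ j, H i j * weightedCov q (X · i) (X · j) := by
  have secondMoment : ∀ i j, (∑ ω, q ω * X ω i) * (H i j * ∑ ω, q ω * X ω j) +
      H i j * weightedCov q (X · i) (X · j) = ∑ ω, q ω * (X ω i * (H i j * X ω j)) := by
    intro i j
    have pullOut : ∑ ω, q ω * (X ω i * (H i j * X ω j)) = H i j * ∑ ω, q ω * (X ω i * X ω j) := by
      rw [mul_sum]
      exact sum_congr rfl fun ω _ => by ring
    rw [pullOut, weightedCov]
    ring
  calc ∑ ω, q ω * (X ω ⬝ᵥ H *ᵥ X ω)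
      = ∑ i, ∑ j, ∑ ω, q ω * (X ω i * (H i j * X ω j)) := by
        simp only [dotProduct, mulVec, mul_sum]
        rw [sum_comm]
        exact sum_congr rfl fun i _ => sum_comm
    _ = ∑ i, ∑ j, ((∑ ω, q ω * X ω i) * (H i j * ∑ ω, q ω * X ω j) +
          H i j * weightedCov q (X · i) (X · j)) := by simp only [secondMoment]
    _ = _ := by simp only [dotProduct, mulVec, mul_sum, sum_add_distrib]

theorem sum_sum_mul_weightedCov_of_uncorrelated (H : Matrix ι ι ℝ)
    (huncorr : ∀ i j, i ≠ j → weightedCov q (X · i) (X · j) = 0) :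
    ∑ i, ∑ j, H i j * weightedCov q (X · i) (X · j) =
      ∑ i, H i i * weightedCov q (X · i) (X · i) :=
  sum_congr rfl fun i _ =>
    Fintype.sum_eq_single i fun j hj => by rw [huncorr i j (Ne.symm hj), mul_zero]

theorem Matrix.PosSemidef.sum_diag_mul_weightedCov_le {H : Matrix ι ι ℝ} (hH : H.PosSemidef)
    (huncorr : ∀ i j, i ≠ j → weightedCov q (X · i) (X · j) = 0) :
    ∑ i, H i i * weightedCov q (X · i) (X · i) ≤ ∑ ω, q ω * (X ω ⬝ᵥ H *ᵥ X ω) := by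
  rw [sum_mul_dotProduct_mulVec_eq, sum_sum_mul_weightedCov_of_uncorrelated q X H huncorr]
  exact le_add_of_nonneg_left (by simpa using hH.dotProduct_mulVec_nonneg _)

end ExpectedQuadraticForm

theorem smoothed_quadratic_penalty_general {d : ℕ} (H : Matrix (Fin d) (Fin d) ℝ)
    (hH : H.PosSemidef) (θs : Fin d → ℝ) (c : ℝ)
    (L : (Fin d → ℝ) → ℝ)
    (hLdef : ∀ θ, L θ = c + (1 / 2) * ((θ - θs) ⬝ᵥ (H *ᵥ (θ - θs))))
    {Ω : Type*} [Fintype Ω] (q : Ω → ℝ) (hq : ∀ ω, 0 ≤ q ω) (hq1 : ∑ ω, q ω = 1)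
    (D : Ω → Fin d → ℝ)
    (huncorr : ∀ i j, i ≠ j →
      ∑ ω, q ω * (D ω i * D ω j) = (∑ ω, q ω * D ω i) * (∑ ω, q ω * D ω j))
    (Var : Fin d → ℝ)
    (hVar : ∀ i, Var i = (∑ ω, q ω * (D ω i) ^ 2) - (∑ ω, q ω * D ω i) ^ 2)
    (Lbar : (Fin d → ℝ) → ℝ)
    (hLbar : ∀ θ, Lbar θ = ∑ ω, q ω * L (fun i => D ω i * θ i)) :
    L θs + (1 / 2) * (∑ i, Var i * H i i * (θs i) ^ 2) ≤ Lbar θs ∧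
      ((∃ i, 0 < Var i ∧ 0 < H i i ∧ θs i ≠ 0) → L θs < Lbar θs) := by
  set X : Ω → Fin d → ℝ := fun ω i => θs i * D ω i + -θs i
  have hLθs : L θs = c := by simp [hLdef]
  have hLbarθs : Lbar θs = 1 / 2 * ∑ ω, q ω * (X ω ⬝ᵥ H *ᵥ X ω) + c := by
    have maskShift : ∀ ω, (fun i => D ω i * θs i) - θs = X ω :=
      fun ω => funext fun i => by simp only [X, Pi.sub_apply]; ring
    rw [hLbar, ← sum_mul_affine hq1]
    exact sum_congr rfl fun ω _ => by rw [hLdef, maskShift, add_comm]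
  have varD : ∀ i, Var i = weightedCov q (D · i) (D · i) := fun i => by
    simp only [hVar, weightedCov, sq]
  have covX : ∀ i j, weightedCov q (X · i) (X · j) = θs i * θs j * weightedCov q (D · i) (D · j) :=
    fun i j => weightedCov_affine hq1 _ _ _ _ _ _
  have uncorrX : ∀ i j, i ≠ j → weightedCov q (X · i) (X · j) = 0 := fun i j hij => by
    rw [covX, weightedCov, huncorr i j hij, sub_self, mul_zero]
  have penalty : ∑ i, Var i * H i i * θs i ^ 2 ≤ ∑ ω, q ω * (X ω ⬝ᵥ H *ᵥ X ω) := by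
    convert hH.sum_diag_mul_weightedCov_le q X uncorrX using 2 with i
    rw [covX, varD]
    ring
  refine ⟨by rw [hLθs, hLbarθs]; linarith, ?_⟩
  rintro ⟨i, hVi, hHi, hθi⟩
  have penalty_pos : 0 < ∑ i, Var i * H i i * θs i ^ 2 := by
    refine sum_pos' (fun j _ => ?_) ⟨i, mem_univ i, by positivity⟩
    have hVarj := varD j ▸ weightedCov_self_nonneg hq hq1 (D · j)
    have hHjj := hH.diag_nonneg (i := j)
    positivity
  rw [hLθs, hLbarθs]
  linarith

/-- Proposition 5 (quadratic form): for the quadratic loss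
`L(θ) = c + (1/2)(θ − θ♯)ᵀ H (θ − θ♯)` with `H` symmetric positive semidefinite, and a
random mask `D` on a finite probability space with values in `[0,1]^d` and pairwise
uncorrelated coordinates, the smoothed objective `L̄(θ) = E[L(D ⊙ θ)]` satisfies
`L̄(θ♯) ≥ L(θ♯) + (1/2) Σ_i Var[D_i] H_{ii} (θ♯_i)²`; in particular it is strictly larger
than `L(θ♯)` as soon as some coordinate has `Var[D_i] > 0`, `H_{ii} > 0`, `θ♯_i ≠ 0`. -/
theorem smoothed_quadratic_penalty {d : ℕ} (H : Matrix (Fin d) (Fin d) ℝ)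
    (hH : H.PosSemidef) (θs : Fin d → ℝ) (c : ℝ)
    (L : (Fin d → ℝ) → ℝ)
    (hLdef : ∀ θ, L θ = c + (1 / 2) * ((θ - θs) ⬝ᵥ (H *ᵥ (θ - θs))))
    {Ω : Type*} [Fintype Ω] (q : Ω → ℝ) (hq : ∀ ω, 0 ≤ q ω) (hq1 : ∑ ω, q ω = 1)
    (D : Ω → Fin d → ℝ) (hD01 : ∀ ω i, 0 ≤ D ω i ∧ D ω i ≤ 1)
    (huncorr : ∀ i j, i ≠ j →
      ∑ ω, q ω * (D ω i * D ω j) = (∑ ω, q ω * D ω i) * (∑ ω, q ω * D ω j))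
    (Var : Fin d → ℝ)
    (hVar : ∀ i, Var i = (∑ ω, q ω * (D ω i) ^ 2) - (∑ ω, q ω * D ω i) ^ 2)
    (Lbar : (Fin d → ℝ) → ℝ)
    (hLbar : ∀ θ, Lbar θ = ∑ ω, q ω * L (fun i => D ω i * θ i)) :
    L θs + (1 / 2) * (∑ i, Var i * H i i * (θs i) ^ 2) ≤ Lbar θs ∧
      ((∃ i, 0 < Var i ∧ 0 < H i i ∧ θs i ≠ 0) → L θs < Lbar θs) :=
  smoothed_quadratic_penalty_general H hH θs c L hLdef q hq hq1 D huncorr Var hVar Lbar hLbar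
end

section
/- (Smoothed Hessian matrix bound) Let H₁, …, H_K : Matrix (Fin d) (Fin d) ℝ be symmetric matrices, λ ∈ ℝ with xᵀ H_k x ≤ λ ‖x‖² for all x ∈ ℝ^d and all k, let m₁, …, m_K ∈ ℝ^d satisfy 0 ≤ (m_k)_i ≤ 1 for all k, i, and let p₁, …, p_K ≥ 0 with Σ_k p_k = 1 and λ ≥ 0. Then the matrix H̄ = Σ_{k=1}^K p_k Diag(m_k) H_k Diag(m_k) satisfies xᵀ H̄ x ≤ λ ‖x‖² for all x ∈ ℝ^d; equivalently, the top eigenvalue of the symmetric matrix H̄ is at most λ. -/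
open Finset Matrix

lemma mySum_mulVec {d K : ℕ} (A : Fin K → Matrix (Fin d) (Fin d) ℝ) (x : Fin d → ℝ) :
    (∑ k, A k) *ᵥ x = ∑ k, A k *ᵥ x := by
  funext i
  simp [Matrix.mulVec, dotProduct, Matrix.sum_apply, Finset.sum_apply,
    Finset.sum_mul]
  rw [Finset.sum_comm]

lemma myDot_sum {d K : ℕ} (x : Fin d → ℝ) (v : Fin K → Fin d → ℝ) :
    x ⬝ᵥ (∑ k, v k) = ∑ k, x ⬝ᵥ v k := by
  simp [dotProduct, Finset.sum_apply, Finset.mul_sum]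
  rw [Finset.sum_comm]

/-- Smoothed Hessian matrix bound: if each symmetric matrix `H_k` has quadratic form
bounded by `λ ‖x‖²`, the masks `m_k` have entries in `[0,1]`, the weights `p_k ≥ 0` sum to
`1`, and `λ ≥ 0`, then the smoothed Hessian
`H̄ = Σ_k p_k Diag(m_k) H_k Diag(m_k)` also satisfies `xᵀ H̄ x ≤ λ ‖x‖²` for all `x`. -/
theorem smoothed_hessian_matrix_bound {d K : ℕ}
    (H : Fin K → Matrix (Fin d) (Fin d) ℝ) (hH : ∀ k, (H k).IsSymm)
    (lam : ℝ) (hlam : 0 ≤ lam)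
    (hquad : ∀ k, ∀ x : Fin d → ℝ, x ⬝ᵥ ((H k) *ᵥ x) ≤ lam * ∑ i, x i ^ 2)
    (m : Fin K → Fin d → ℝ) (hm : ∀ k i, 0 ≤ m k i ∧ m k i ≤ 1)
    (p : Fin K → ℝ) (hp : ∀ k, 0 ≤ p k) (hp1 : ∑ k, p k = 1) :
    ∀ x : Fin d → ℝ,
      x ⬝ᵥ ((∑ k, p k • (Matrix.diagonal (m k) * H k * Matrix.diagonal (m k))) *ᵥ x)
        ≤ lam * ∑ i, x i ^ 2 := by
  intro x
  have key : ∀ k, x ⬝ᵥ ((Matrix.diagonal (m k) * H k * Matrix.diagonal (m k)) *ᵥ x)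
      ≤ lam * ∑ i, x i ^ 2 := by
    intro k
    set y : Fin d → ℝ := fun i => m k i * x i with hy
    have hdy : Matrix.diagonal (m k) *ᵥ x = y :=
      funext fun i => Matrix.mulVec_diagonal _ _ _
    have h1 : x ⬝ᵥ ((Matrix.diagonal (m k) * H k * Matrix.diagonal (m k)) *ᵥ x)
        = y ⬝ᵥ (H k *ᵥ y) := by
      rw [← Matrix.mulVec_mulVec, ← Matrix.mulVec_mulVec, hdy]
      simp [dotProduct, Matrix.mulVec_diagonal, hy, mul_assoc, mul_comm,
        mul_left_comm]
    calc x ⬝ᵥ ((Matrix.diagonal (m k) * H k * Matrix.diagonal (m k)) *ᵥ x)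
        = y ⬝ᵥ (H k *ᵥ y) := h1
      _ ≤ lam * ∑ i, y i ^ 2 := hquad k y
      _ ≤ lam * ∑ i, x i ^ 2 := by
          apply mul_le_mul_of_nonneg_left _ hlam
          apply Finset.sum_le_sum
          intro i _
          have h := hm k i
          simp only [hy]
          nlinarith [mul_nonneg (mul_nonneg (sub_nonneg.2 h.2) (by linarith [h.1] : (0:ℝ) ≤ 1 + m k i)) (sq_nonneg (x i))]
  calc x ⬝ᵥ ((∑ k, p k • (Matrix.diagonal (m k) * H k * Matrix.diagonal (m k))) *ᵥ x)
      = ∑ k, p k * (x ⬝ᵥ ((Matrix.diagonal (m k) * H k * Matrix.diagonal (m k)) *ᵥ x)) := by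
        rw [mySum_mulVec, myDot_sum]
        refine Finset.sum_congr rfl fun k _ => ?_
        rw [Matrix.smul_mulVec, dotProduct_smul]
        rfl
    _ ≤ ∑ k, p k * (lam * ∑ i, x i ^ 2) := Finset.sum_le_sum fun k _ =>
        mul_le_mul_of_nonneg_left (key k) (hp k)
    _ = lam * ∑ i, x i ^ 2 := by rw [← Finset.sum_mul, hp1, one_mul]
end
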